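/- Let M_t ∈ ℝ^{m×n_t}, and suppose M_t M_tᵀ = Q_t S_t Q_tᵀ where Q_t ∈ ℝ^{m×r_t} has orthonormal columns and S_t ∈ ℝ^{r_t×r_t} is symmetric positive semidefinite. Let A_{t+1} ∈ ℝ^{m×k}, set Y := Q_tᵀ A_{t+1} and R := A_{t+1} − Q_t Y, and let R = Q_res B be a thin QR decomposition with Q_res ∈ ℝ^{m×r_res} having orthonormal columns. Define Q_{t+1} := [Q_t, Q_res] and the block matrix S_{t+1} with blocks [[S_t + Y Yᵀ, Y Bᵀ], [B Yᵀ, B Bᵀ]]. Then Q_{t+1} has orthonormal columns and M_{t+1} M_{t+1}ᵀ = Q_{t+1} S_{t+1} Q_{t+1}ᵀ, where M_{t+1} := [M_t, A_{t+1}]. -/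

import Mathlib

open Matrix

/-- Over `ℝ`, the conjugate transpose is the transpose. -/
lemma real_conjTranspose_eq_transpose {ι κ : Type*} (X : Matrix ι κ ℝ) : Xᴴ = Xᵀ :=
  Matrix.ext fun _ _ => star_trivial _

/-- The Gram matrix `X Xᵀ` of a real matrix is Hermitian (symmetric). -/
lemma gram_isHermitian {m : ℕ} {ι : Type*} [Fintype ι] (X : Matrix (Fin m) ι ℝ) :
    (X * Xᵀ).IsHermitian := by
  rw [← real_conjTranspose_eq_transpose]
  exact isHermitian_mul_conjTranspose_self X

/-- `sValSq X j` is `σ_{j+1}(X)²`, the `(j+1)`-st largest squared singular value of `X`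
(0-indexed `j`), i.e. the `(j+1)`-st largest eigenvalue of `X Xᵀ`, extended by zeros. -/
noncomputable def sValSq {m : ℕ} {ι : Type*} [Fintype ι] (X : Matrix (Fin m) ι ℝ) (j : ℕ) : ℝ :=
  ((List.ofFn (gram_isHermitian X).eigenvalues).mergeSort (fun a b => decide (b ≤ a))).getD j 0

/-- `sVal X j` is the `(j+1)`-st largest singular value `σ_{j+1}(X)` (0-indexed `j`),
extended by zeros. -/
noncomputable def sVal {m : ℕ} {ι : Type*} [Fintype ι] (X : Matrix (Fin m) ι ℝ) (j : ℕ) : ℝ :=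
  Real.sqrt (sValSq X j)

/-- Squared Frobenius norm. -/
noncomputable def frobSq {ι κ : Type*} [Fintype ι] [Fintype κ] (X : Matrix ι κ ℝ) : ℝ :=
  ∑ i, ∑ j, X i j ^ 2

/-- `errSq X r = E_r²(X) = min_{rank Y ≤ r} ‖X - Y‖_F²`,
the optimal rank-`r` Frobenius approximation error (squared). -/
noncomputable def errSq {m : ℕ} {ι : Type*} [Fintype ι] (X : Matrix (Fin m) ι ℝ) (r : ℕ) : ℝ :=
  sInf {e : ℝ | ∃ Y : Matrix (Fin m) ι ℝ, Y.rank ≤ r ∧ e = frobSq (X - Y)}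

/-- Horizontal concatenation `[A 0, …, A (K-1)]` of blocks indexed by `Fin K`. -/
def hcatF (m K : ℕ) (n : Fin K → ℕ) (A : ∀ j, Matrix (Fin m) (Fin (n j)) ℝ) :
    Matrix (Fin m) ((j : Fin K) × Fin (n j)) ℝ := fun i c => A c.1 i c.2

/-- Horizontal concatenation `[A 0, …, A (K-1)]` of the first `K` blocks of an
`ℕ`-indexed family; `hcatN m t n A` is the prefix concatenation `M_t`. -/
def hcatN (m K : ℕ) (n : ℕ → ℕ) (A : ∀ j : ℕ, Matrix (Fin m) (Fin (n j)) ℝ) :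
    Matrix (Fin m) ((j : Fin K) × Fin (n j)) ℝ := fun i c => A c.1 i c.2

/-!
Writing `A = Q_t Y + R = Q_t Y + Q_res B`, the Gram matrix of `[M_t, A]` is
`Q_t S_t Q_tᵀ + (Q_t Y + Q_res B)(Q_t Y + Q_res B)ᵀ`; expanding the product gives exactly the
four blocks of `S_{t+1}` sandwiched between `[Q_t, Q_res]` and its transpose.
-/

namespace Matrix

variable {R m n₁ n₂ : Type*} [CommRing R]

theorem fromCols_mul_transpose_fromCols [Fintype n₁] [Fintype n₂]
    (M : Matrix m n₁ R) (A : Matrix m n₂ R) :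
    fromCols M A * (fromCols M A)ᵀ = M * Mᵀ + A * Aᵀ := by
  rw [transpose_fromCols, fromCols_mul_fromRows]

theorem transpose_fromCols_mul_fromCols_eq_one [Fintype m] [DecidableEq n₁] [DecidableEq n₂]
    {P : Matrix m n₁ R} {Q : Matrix m n₂ R}
    (hP : Pᵀ * P = 1) (hQ : Qᵀ * Q = 1) (hPQ : Pᵀ * Q = 0) :
    (fromCols P Q)ᵀ * fromCols P Q = 1 := by
  have hQP : Qᵀ * P = 0 := by simpa using congrArg transpose hPQ
  rw [transpose_fromCols, fromRows_mul_fromCols, hP, hQ, hPQ, hQP, fromBlocks_one]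

theorem fromCols_mul_fromBlocks_mul_transpose_fromCols [Fintype n₁] [Fintype n₂]
    (P : Matrix m n₁ R) (Q : Matrix m n₂ R) (a : Matrix n₁ n₁ R) (b : Matrix n₁ n₂ R)
    (c : Matrix n₂ n₁ R) (d : Matrix n₂ n₂ R) :
    fromCols P Q * fromBlocks a b c d * (fromCols P Q)ᵀ =
      P * a * Pᵀ + P * b * Qᵀ + Q * c * Pᵀ + Q * d * Qᵀ := by
  rw [fromCols_mul_fromBlocks, transpose_fromCols, fromCols_mul_fromRows]
  simp only [Matrix.add_mul, Matrix.mul_assoc]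
  abel

end Matrix

theorem incremental_gram_factorisation_general
    (m nt rt k rres : ℕ)
    (M : Matrix (Fin m) (Fin nt) ℝ)
    (Qt : Matrix (Fin m) (Fin rt) ℝ) (hQt : Qtᵀ * Qt = 1)
    (S : Matrix (Fin rt) (Fin rt) ℝ)
    (hMQS : M * Mᵀ = Qt * S * Qtᵀ)
    (A : Matrix (Fin m) (Fin k) ℝ)
    (Y : Matrix (Fin rt) (Fin k) ℝ)
    (R : Matrix (Fin m) (Fin k) ℝ) (hRdef : R = A - Qt * Y)
    (Qres : Matrix (Fin m) (Fin rres) ℝ) (B : Matrix (Fin rres) (Fin k) ℝ)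
    (hQres : Qresᵀ * Qres = 1) (hQR : R = Qres * B)
    (hQtQres : Qtᵀ * Qres = 0) :
    (Matrix.fromCols Qt Qres)ᵀ * Matrix.fromCols Qt Qres = 1 ∧
      (Matrix.fromCols M A) * (Matrix.fromCols M A)ᵀ =
        Matrix.fromCols Qt Qres *
          Matrix.fromBlocks (S + Y * Yᵀ) (Y * Bᵀ) (B * Yᵀ) (B * Bᵀ) *
            (Matrix.fromCols Qt Qres)ᵀ := by
  have hA : A = Qt * Y + Qres * B := by rw [← hQR, hRdef, add_sub_cancel]
  refine ⟨transpose_fromCols_mul_fromCols_eq_one hQt hQres hQtQres, ?_⟩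
  rw [fromCols_mul_transpose_fromCols, fromCols_mul_fromBlocks_mul_transpose_fromCols, hMQS, hA]
  simp only [transpose_add, transpose_mul, Matrix.add_mul, Matrix.mul_add, Matrix.mul_assoc]
  abel

/-- exact incremental Gram factorisation for concatenated blocks.
Given `M_t M_tᵀ = Q_t S_t Q_tᵀ` with `Q_t` orthonormal and `S_t` symmetric PSD, a new
block `A`, `Y = Q_tᵀ A`, `R = A − Q_t Y`, and a thin QR decomposition `R = Q_res B`
with `Q_res` having orthonormal columns (orthogonal to `range(Q_t)`, i.e.
`Q_tᵀ Q_res = 0`), the extended basis `Q_{t+1} = [Q_t, Q_res]` has orthonormal columns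
and `M_{t+1} M_{t+1}ᵀ = Q_{t+1} S_{t+1} Q_{t+1}ᵀ` where `M_{t+1} = [M_t, A]` and
`S_{t+1} = [[S_t + Y Yᵀ, Y Bᵀ], [B Yᵀ, B Bᵀ]]`. -/
theorem incremental_gram_factorisation
    (m nt rt k rres : ℕ)
    (M : Matrix (Fin m) (Fin nt) ℝ)
    (Qt : Matrix (Fin m) (Fin rt) ℝ) (hQt : Qtᵀ * Qt = 1)
    (S : Matrix (Fin rt) (Fin rt) ℝ) (hS : S.PosSemidef)
    (hMQS : M * Mᵀ = Qt * S * Qtᵀ)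
    (A : Matrix (Fin m) (Fin k) ℝ)
    (Y : Matrix (Fin rt) (Fin k) ℝ) (hY : Y = Qtᵀ * A)
    (R : Matrix (Fin m) (Fin k) ℝ) (hRdef : R = A - Qt * Y)
    (Qres : Matrix (Fin m) (Fin rres) ℝ) (B : Matrix (Fin rres) (Fin k) ℝ)
    (hQres : Qresᵀ * Qres = 1) (hQR : R = Qres * B)
    (hQtQres : Qtᵀ * Qres = 0) :
    (Matrix.fromCols Qt Qres)ᵀ * Matrix.fromCols Qt Qres = 1 ∧
      (Matrix.fromCols M A) * (Matrix.fromCols M A)ᵀ =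
        Matrix.fromCols Qt Qres *
          Matrix.fromBlocks (S + Y * Yᵀ) (Y * Bᵀ) (B * Yᵀ) (B * Bᵀ) *
            (Matrix.fromCols Qt Qres)ᵀ :=
  incremental_gram_factorisation_general m nt rt k rres M Qt hQt S hMQS A Y R hRdef Qres B hQres hQR
    hQtQres
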